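/- Let x_1 ≠ x_2 ∈ ℝ^d and Y = (y_1, y_2) ∈ (ℝ^d)^2, and set m_k = #{j ∈ {1,2} : y_j = x_k} for k = 1, 2. Then the JS-GAN loss takes the following values: if (m_1, m_2) = (1,1) then φ_JS(Y, X) = −log 2; if (m_1, m_2) ∈ {(1,0), (0,1)} then φ_JS(Y, X) = −(1/2)·log 2; if (m_1, m_2) ∈ {(2,0), (0,2)} then φ_JS(Y, X) = (1/4)·log(1/3) + (1/2)·log(2/3); if (m_1, m_2) = (0,0) then φ_JS(Y, X) = 0. -/

import Mathlib

/-!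
The objective of `phiJS` only depends on the values of `D` at the finitely many sample points,
and these values can be prescribed independently (Tietze extension from a finite set). Grouping
the sum by points, a point `p` carrying `a` real and `b` fake samples contributes
`a log D(p) + b log(1 - D(p))`, whose supremum over `D(p) ∈ (0,1)` is the maximal Bernoulli
log-likelihood `a log (a/(a+b)) + b log (b/(a+b))` (Gibbs' inequality, approached as
`D(p) → a/(a+b)`). Points carrying no real sample contribute `0`, so for distinct
`x₁, x₂` the loss is `(g(m₁) + g(m₂)) / 4` with `g(m) = log (1/(1+m)) + m log (m/(1+m))`.
-/

open scoped BigOperators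

/-- The JS-GAN loss
φ_JS(Y, X) = sup over continuous D : ℝ^d → (0,1) of
(1/(2n)) · Σ_i [log D(x_i) + log(1 − D(y_i))]. -/
noncomputable def phiJS {d n : ℕ} (x Y : Fin n → EuclideanSpace ℝ (Fin d)) : ℝ :=
  sSup {s : ℝ | ∃ D : EuclideanSpace ℝ (Fin d) → ℝ, Continuous D ∧
    (∀ u, D u ∈ Set.Ioo (0 : ℝ) 1) ∧
    s = (1 / (2 * (n : ℝ))) * ∑ i, (Real.log (D (x i)) + Real.log (1 - D (Y i)))}

open Real Set Filter Topology

noncomputable def bernoulliMaxLogLik (a b : ℝ) : ℝ :=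
  a * log (a / (a + b)) + b * log (b / (a + b))

lemma bernoulliMaxLogLik_zero_left (b : ℝ) : bernoulliMaxLogLik 0 b = 0 := by
  rcases eq_or_ne b 0 with rfl | hb <;> simp [bernoulliMaxLogLik, *]

-- `log y ≤ y - 1` at `y = s t / a`
lemma mul_log_le_mul_log_div_add {a s t : ℝ} (ha : 0 ≤ a) (hs : 0 < s) (ht : 0 < t) :
    a * log t ≤ a * log (a / s) + s * t - a := by
  rcases ha.eq_or_lt with rfl | ha
  · simp only [zero_mul, zero_add, sub_zero]
    positivity
  have key : log (t / (a / s)) ≤ t / (a / s) - 1 := log_le_sub_one_of_pos (by positivity)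
  rw [log_div ht.ne' (by positivity)] at key
  have e : a * (t / (a / s) - 1) = s * t - a := by field_simp
  nlinarith

lemma mul_log_add_mul_log_one_sub_le {a b t : ℝ} (ha : 0 ≤ a) (hb : 0 ≤ b)
    (ht : t ∈ Ioo (0 : ℝ) 1) : a * log t + b * log (1 - t) ≤ bernoulliMaxLogLik a b := by
  obtain ⟨ht0, ht1⟩ := ht
  rcases (add_nonneg ha hb).eq_or_lt with hab | hab
  · obtain ⟨rfl, rfl⟩ : a = 0 ∧ b = 0 := ⟨by linarith, by linarith⟩
    simp [bernoulliMaxLogLik]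
  have h1 := mul_log_le_mul_log_div_add ha hab ht0
  have h2 := mul_log_le_mul_log_div_add hb hab (sub_pos.2 ht1)
  unfold bernoulliMaxLogLik
  linarith

lemma tendsto_mul_log_add_div {a b : ℝ} (ha : 0 ≤ a) (hb : 0 ≤ b) :
    Tendsto (fun ε : ℝ => a * log ((a + ε) / (a + b + 2 * ε))) (𝓝[>] 0)
      (𝓝 (a * log (a / (a + b)))) := by
  rcases ha.eq_or_lt with rfl | ha
  · simp
  have hcont : ContinuousAt (fun ε : ℝ => a * log ((a + ε) / (a + b + 2 * ε))) 0 := by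
    have : a + b + 2 * 0 ≠ 0 := by positivity
    have : (a + 0) / (a + b + 2 * 0) ≠ 0 := by positivity
    fun_prop (disch := assumption)
  simpa using hcont.tendsto.mono_left nhdsWithin_le_nhds

theorem isLUB_bernoulliMaxLogLik {a b : ℝ} (ha : 0 ≤ a) (hb : 0 ≤ b) :
    IsLUB ((fun t => a * log t + b * log (1 - t)) '' Ioo 0 1) (bernoulliMaxLogLik a b) := by
  refine ⟨?_, fun c hc => ?_⟩
  · rintro _ ⟨t, ht, rfl⟩
    exact mul_log_add_mul_log_one_sub_le ha hb ht
  -- `τ ε` lies in `(0,1)` even when the maximiser `a / (a + b)` is `0` or `1`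
  set τ : ℝ → ℝ := fun ε => (a + ε) / (a + b + 2 * ε)
  have hτ : ∀ ε > 0, τ ε ∈ Ioo (0 : ℝ) 1 := fun ε hε =>
    ⟨by positivity, (div_lt_one (by positivity)).2 (by linarith)⟩
  have hlim : Tendsto (fun ε => a * log (τ ε) + b * log (1 - τ ε)) (𝓝[>] 0)
      (𝓝 (bernoulliMaxLogLik a b)) := by
    have h := (tendsto_mul_log_add_div ha hb).add (tendsto_mul_log_add_div hb ha)
    rw [add_comm b a] at h
    refine h.congr' (eventually_nhdsWithin_of_forall fun ε (hε : 0 < ε) => ?_)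
    have : a + b + 2 * ε ≠ 0 := by positivity
    simp only [τ]
    congr 3
    field_simp
    ring
  exact le_of_tendsto hlim (eventually_nhdsWithin_of_forall fun ε hε => hc ⟨τ ε, hτ ε hε, rfl⟩)

section Separable

variable {E : Type*} [TopologicalSpace E] [T1Space E] [NormalSpace E]

theorem exists_continuous_Ioo_eqOn (S : Finset E) (v : E → ℝ)
    (hv : ∀ p ∈ S, v p ∈ Ioo (0 : ℝ) 1) :
    ∃ D : E → ℝ, Continuous D ∧ (∀ u, D u ∈ Ioo (0 : ℝ) 1) ∧ ∀ p ∈ S, D p = v p := by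
  let f : C((S : Set E), ℝ) := ⟨fun p => v p, continuous_of_discreteTopology⟩
  obtain ⟨g, hg, hgf⟩ := f.exists_restrict_eq_forall_mem_of_closed (t := Ioo 0 1)
    (fun p => hv p p.2) (nonempty_Ioo.2 one_pos) S.finite_toSet.isClosed
  exact ⟨g, g.continuous, hg, fun p hp => DFunLike.congr_fun hgf ⟨p, hp⟩⟩

theorem isLUB_sum_comp_continuous (S : Finset E) (F : E → ℝ → ℝ) (c : E → ℝ)
    (hF : ∀ p ∈ S, IsLUB (F p '' Ioo 0 1) (c p)) :
    IsLUB {s | ∃ D : E → ℝ, Continuous D ∧ (∀ u, D u ∈ Ioo (0 : ℝ) 1) ∧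
      s = ∑ p ∈ S, F p (D p)} (∑ p ∈ S, c p) := by
  refine ⟨?_, fun M hM => le_of_forall_lt fun w hw => ?_⟩
  · rintro _ ⟨D, -, hD, rfl⟩
    exact Finset.sum_le_sum fun p hp => (hF p hp).1 ⟨D p, hD p, rfl⟩
  set η := (∑ p ∈ S, c p - w) / (S.card + 1)
  have hη : 0 < η := div_pos (sub_pos.2 hw) (by positivity)
  have hnear : ∀ p ∈ S, ∃ t ∈ Ioo (0 : ℝ) 1, c p - η < F p t := fun p hp => by
    obtain ⟨_, ⟨t, ht, rfl⟩, hlt, -⟩ := (hF p hp).exists_between (sub_lt_self _ hη)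
    exact ⟨t, ht, hlt⟩
  choose! t ht hFt using hnear
  obtain ⟨D, hDc, hD, hDt⟩ := exists_continuous_Ioo_eqOn S t ht
  refine lt_of_lt_of_le ?_ (hM ⟨D, hDc, hD, rfl⟩)
  have hslack : (S.card : ℝ) * η < ∑ p ∈ S, c p - w := by
    rw [mul_div_assoc', div_lt_iff₀ (by positivity)]
    nlinarith
  calc w < ∑ p ∈ S, c p - S.card * η := by linarith
    _ = ∑ p ∈ S, (c p - η) := by simp [Finset.sum_sub_distrib]
    _ ≤ ∑ p ∈ S, F p (D p) := Finset.sum_le_sum fun p hp => by rw [hDt p hp]; exact (hFt p hp).le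

end Separable

theorem Finset.sum_comp_eq_sum_card_filter_mul {ι E R : Type*} [Fintype ι] [DecidableEq E]
    [NonAssocSemiring R] (x : ι → E) (f : E → R) {S : Finset E} (hS : ∀ i, x i ∈ S) :
    ∑ i, f (x i) = ∑ p ∈ S, ((Finset.univ.filter fun i => x i = p).card : R) * f p := by
  rw [← Finset.sum_fiberwise_of_maps_to (fun i _ => hS i)]
  refine Finset.sum_congr rfl fun p _ => ?_
  rw [Finset.sum_congr rfl fun i hi => by rw [(Finset.mem_filter.1 hi).2], Finset.sum_const,
    nsmul_eq_mul]

open Classical in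
theorem phiJS_eq_sum_bernoulliMaxLogLik {d n : ℕ} (x Y : Fin n → EuclideanSpace ℝ (Fin d)) :
    phiJS x Y = 1 / (2 * n) * ∑ p ∈ Finset.univ.image x ∪ Finset.univ.image Y,
      bernoulliMaxLogLik (Finset.univ.filter fun i => x i = p).card
        (Finset.univ.filter fun j => Y j = p).card := by
  rw [phiJS, Finset.mul_sum]
  set S := Finset.univ.image x ∪ Finset.univ.image Y
  set k : ℝ := 1 / (2 * n)
  set a : EuclideanSpace ℝ (Fin d) → ℝ := fun p => (Finset.univ.filter fun i => x i = p).card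
  set b : EuclideanSpace ℝ (Fin d) → ℝ := fun p => (Finset.univ.filter fun j => Y j = p).card
  have hregroup : ∀ D : EuclideanSpace ℝ (Fin d) → ℝ,
      k * ∑ i, (log (D (x i)) + log (1 - D (Y i))) =
        ∑ p ∈ S, k * (a p * log (D p) + b p * log (1 - D p)) := fun D => by
    rw [Finset.sum_add_distrib,
      Finset.sum_comp_eq_sum_card_filter_mul x (fun p => log (D p)) (S := S) (by simp [S]),
      Finset.sum_comp_eq_sum_card_filter_mul Y (fun p => log (1 - D p)) (S := S) (by simp [S]),
      ← Finset.sum_add_distrib, Finset.mul_sum]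
  have hlub := isLUB_sum_comp_continuous S (fun p t => k * (a p * log t + b p * log (1 - t)))
    (fun p => k * bernoulliMaxLogLik (a p) (b p)) fun p _ => by
      simpa only [Set.image_image] using
        (isLUB_bernoulliMaxLogLik (Nat.cast_nonneg _) (Nat.cast_nonneg _)).mul_left
          (by positivity : 0 ≤ k)
  simp only [hregroup]
  exact hlub.csSup_eq ⟨_, fun _ => 1 / 2, continuous_const, fun _ => ⟨by norm_num, by norm_num⟩, rfl⟩

open Classical in
theorem phiJS_eq_sum_of_injective {d n : ℕ} {x : Fin n → EuclideanSpace ℝ (Fin d)}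
    (hx : Function.Injective x) (Y : Fin n → EuclideanSpace ℝ (Fin d)) :
    phiJS x Y =
      1 / (2 * n) * ∑ i, bernoulliMaxLogLik 1 (Finset.univ.filter fun j => Y j = x i).card := by
  rw [phiJS_eq_sum_bernoulliMaxLogLik, ← Finset.sum_subset Finset.subset_union_left,
    Finset.sum_image hx.injOn]
  · refine congrArg _ (Finset.sum_congr rfl fun i _ => ?_)
    rw [show (Finset.univ.filter fun j => x j = x i) = {i} by ext; simp [hx.eq_iff]]
    simp
  · intro p _ hp
    have hempty : (Finset.univ.filter fun i => x i = p) = ∅ :=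
      Finset.filter_eq_empty_iff.2 fun i _ hi => hp (hi ▸ Finset.mem_image_of_mem x
        (Finset.mem_univ i))
    rw [hempty, Finset.card_empty, Nat.cast_zero, bernoulliMaxLogLik_zero_left]

theorem stmt6_general {d : ℕ}
    (x : Fin 2 → EuclideanSpace ℝ (Fin d)) (hx : x 0 ≠ x 1)
    (Y : Fin 2 → EuclideanSpace ℝ (Fin d))
    (m : Fin 2 → ℕ) (hm : ∀ k, m k = Set.ncard {j : Fin 2 | Y j = x k}) :
    ((m 0 = 1 ∧ m 1 = 1) → phiJS x Y = -Real.log 2) ∧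
    (((m 0 = 1 ∧ m 1 = 0) ∨ (m 0 = 0 ∧ m 1 = 1)) →
      phiJS x Y = -(1 / 2) * Real.log 2) ∧
    (((m 0 = 2 ∧ m 1 = 0) ∨ (m 0 = 0 ∧ m 1 = 2)) →
      phiJS x Y = (1 / 4) * Real.log (1 / 3) + (1 / 2) * Real.log (2 / 3)) ∧
    ((m 0 = 0 ∧ m 1 = 0) → phiJS x Y = 0) := by
  have hinj : Function.Injective x := by
    intro i j h
    fin_cases i <;> fin_cases j <;> simp_all [eq_comm]
  have hφ : phiJS x Y = 1 / 4 * (bernoulliMaxLogLik 1 (m 0) + bernoulliMaxLogLik 1 (m 1)) := by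
    rw [phiJS_eq_sum_of_injective hinj Y, Fin.sum_univ_two, hm, hm]
    norm_num [Set.ncard_eq_toFinset_card']
  have h0 : bernoulliMaxLogLik 1 0 = 0 := by simp [bernoulliMaxLogLik]
  have h1 : bernoulliMaxLogLik 1 1 = -2 * log 2 := by
    norm_num [bernoulliMaxLogLik]
    rw [one_div, log_inv]
    ring
  have h2 : bernoulliMaxLogLik 1 2 = log (1 / 3) + 2 * log (2 / 3) := by
    norm_num [bernoulliMaxLogLik]
  rw [hφ]
  refine ⟨?_, ?_, ?_, ?_⟩
  · rintro ⟨h, h'⟩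
    simp only [h, h', Nat.cast_one, h1]; ring
  · rintro (⟨h, h'⟩ | ⟨h, h'⟩) <;> simp only [h, h', Nat.cast_zero, Nat.cast_one, h0, h1] <;> ring
  · rintro (⟨h, h'⟩ | ⟨h, h'⟩) <;> simp only [h, h', Nat.cast_zero, Nat.cast_ofNat, h0, h2] <;> ring
  · rintro ⟨h, h'⟩
    simp only [h, h', Nat.cast_zero, h0]; ring

theorem stmt6 {d : ℕ} (hd : 1 ≤ d)
    (x : Fin 2 → EuclideanSpace ℝ (Fin d)) (hx : x 0 ≠ x 1)
    (Y : Fin 2 → EuclideanSpace ℝ (Fin d))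
    (m : Fin 2 → ℕ) (hm : ∀ k, m k = Set.ncard {j : Fin 2 | Y j = x k}) :
    ((m 0 = 1 ∧ m 1 = 1) → phiJS x Y = -Real.log 2) ∧
    (((m 0 = 1 ∧ m 1 = 0) ∨ (m 0 = 0 ∧ m 1 = 1)) →
      phiJS x Y = -(1 / 2) * Real.log 2) ∧
    (((m 0 = 2 ∧ m 1 = 0) ∨ (m 0 = 0 ∧ m 1 = 2)) →
      phiJS x Y = (1 / 4) * Real.log (1 / 3) + (1 / 2) * Real.log (2 / 3)) ∧
    ((m 0 = 0 ∧ m 1 = 0) → phiJS x Y = 0) :=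
  stmt6_general x hx Y m hm
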